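/- arXiv:0802.1253 — 2 statements merged into one kernel-verified Lean document; each statement's English description precedes it below -/
import Mathlib

section
/- Let u, v : ℝ × ℝ → ℝ be smooth solutions of system (3.3): u_t = u_xxx + v u_x, v_t = −(1/2)v_xxx − v v_x + u_x. Define h = (1/6)v_xx + (1/9)(v² − 2u) − 2λ², and the 4×4 matrices: Ũ with rows (0,1,0,0), (−v/3 − λ, 0, 1, 0), (0,0,0,1), (u/9, 0, λ − v/3, 0); Ṽ with rows (v_x/6, 2λ − v/3, 0, −2), (h − λv/3, −v_x/6, v/3, 0), (u_x/9, −2u/9, v_x/6, −2λ − v/3), (uv/27 + u_xx/9, −u_x/9, h + λv/3, −v_x/6). Then for every constant λ, Ũ_t − Ṽ_x + [Ũ, Ṽ] = 0. -/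
noncomputable section

def dt (f : ℝ × ℝ → ℝ) (p : ℝ × ℝ) : ℝ := deriv (fun s => f (s, p.2)) p.1

def dx (f : ℝ × ℝ → ℝ) (p : ℝ × ℝ) : ℝ := deriv (fun y => f (p.1, y)) p.2

def dtM (n : ℕ) (F : ℝ × ℝ → Matrix (Fin n) (Fin n) ℝ) (p : ℝ × ℝ) :
    Matrix (Fin n) (Fin n) ℝ :=
  Matrix.of fun i j => deriv (fun s => F (s, p.2) i j) p.1

def dxM (n : ℕ) (F : ℝ × ℝ → Matrix (Fin n) (Fin n) ℝ) (p : ℝ × ℝ) :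
    Matrix (Fin n) (Fin n) ℝ :=
  Matrix.of fun i j => deriv (fun y => F (p.1, y) i j) p.2

lemma dx_contDiff {f : ℝ × ℝ → ℝ} (hf : ContDiff ℝ (⊤ : ℕ∞) f) : ContDiff ℝ (⊤ : ℕ∞) (dx f) := by
  have he : dx f = fun p => (fderiv ℝ f p) (0, 1) := by
    funext p
    have hg : HasDerivAt (fun y => ((p.1 : ℝ), y)) ((0 : ℝ), (1 : ℝ)) p.2 :=
      (hasDerivAt_const _ _).prodMk (hasDerivAt_id _)
    have hF : HasFDerivAt f (fderiv ℝ f p) ((fun y => ((p.1 : ℝ), y)) p.2) := by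
      simpa using (hf.differentiable (by simp) p).hasFDerivAt
    exact (hF.comp_hasDerivAt p.2 hg).deriv
  rw [he]
  exact (hf.fderiv_right (by simp)).clm_apply contDiff_const

set_option maxHeartbeats 2000000 in
/-- The explicit 4×4 zero curvature representation (5.12)–(5.13) of system (3.3):
`u_t = u₃ + v u₁`, `v_t = −½v₃ − v v₁ + u₁`. -/
theorem stmt17 (u v : ℝ × ℝ → ℝ) (hu : ContDiff ℝ (⊤ : ℕ∞) u) (hv : ContDiff ℝ (⊤ : ℕ∞) v)
    (h1 : ∀ p, dt u p = dx (dx (dx u)) p + v p * dx u p)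
    (h2 : ∀ p, dt v p = -(1/2) * dx (dx (dx v)) p - v p * dx v p + dx u p)
    (lam : ℝ) :
    let h : ℝ × ℝ → ℝ := fun p =>
      (1/6) * dx (dx v) p + (1/9) * ((v p) ^ 2 - 2 * u p) - 2 * lam ^ 2
    let U : ℝ × ℝ → Matrix (Fin 4) (Fin 4) ℝ := fun p =>
      !![0, 1, 0, 0;
         -(v p) / 3 - lam, 0, 1, 0;
         0, 0, 0, 1;
         u p / 9, 0, lam - v p / 3, 0]
    let V : ℝ × ℝ → Matrix (Fin 4) (Fin 4) ℝ := fun p =>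
      !![dx v p / 6, 2 * lam - v p / 3, 0, -2;
         h p - lam * v p / 3, -(dx v p) / 6, v p / 3, 0;
         dx u p / 9, -2 * u p / 9, dx v p / 6, -2 * lam - v p / 3;
         u p * v p / 27 + dx (dx u) p / 9, -(dx u p) / 9, h p + lam * v p / 3,
           -(dx v p) / 6]
    ∀ p, dtM 4 U p - dxM 4 V p + (U p * V p - V p * U p) = 0 := by
  intro h U V p
  have Du : Differentiable ℝ u := hu.differentiable (by simp)
  have Dv : Differentiable ℝ v := hv.differentiable (by simp)
  have Du1 : Differentiable ℝ (dx u) := (dx_contDiff hu).differentiable (by simp)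
  have Dv1 : Differentiable ℝ (dx v) := (dx_contDiff hv).differentiable (by simp)
  have Du2 : Differentiable ℝ (dx (dx u)) :=
    (dx_contDiff (dx_contDiff hu)).differentiable (by simp)
  have Dv2 : Differentiable ℝ (dx (dx v)) :=
    (dx_contDiff (dx_contDiff hv)).differentiable (by simp)
  have eqT : dtM 4 U p =
      !![0, 0, 0, 0;
         -(dt v p) / 3, 0, 0, 0;
         0, 0, 0, 0;
         dt u p / 9, 0, -(dt v p) / 3, 0] := by
    ext i j
    fin_cases i <;> fin_cases j <;>
      simp [dtM, dt, U, deriv_div_const, deriv_sub_const, deriv_const_sub,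
        Matrix.vecHead, Matrix.vecTail, neg_div]
  have eqX : dxM 4 V p =
      !![dx (dx v) p / 6, -(dx v p) / 3, 0, 0;
         (1/6) * dx (dx (dx v)) p + (1/9) * (2 * v p * dx v p - 2 * dx u p)
           - lam * dx v p / 3, -(dx (dx v) p) / 6, dx v p / 3, 0;
         dx (dx u) p / 9, -2 * dx u p / 9, dx (dx v) p / 6, -(dx v p) / 3;
         (dx u p * v p + u p * dx v p) / 27 + dx (dx (dx u)) p / 9,
           -(dx (dx u) p) / 9,
           (1/6) * dx (dx (dx v)) p + (1/9) * (2 * v p * dx v p - 2 * dx u p)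
             + lam * dx v p / 3, -(dx (dx v) p) / 6] := by
    ext i j
    fin_cases i <;> fin_cases j <;>
      simp (disch := fun_prop) [dxM, V, h, deriv_sub, deriv_add, deriv_mul,
        deriv_div_const, deriv_pow, deriv_const_mul, deriv_sub_const,
        deriv_const_sub, Matrix.vecHead, Matrix.vecTail, neg_div] <;>
      (try (simp [dx]; try ring))
  rw [eqT, eqX]
  ext i j
  fin_cases i <;> fin_cases j <;>
    simp [Matrix.mul_apply, Fin.sum_univ_four, U, V, h,
      Matrix.vecHead, Matrix.vecTail] <;>
    ring_nf
  · linear_combination (-1/3 : ℝ) * h2 p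
  · linear_combination (1/9 : ℝ) * h1 p
  · linear_combination (-1/3 : ℝ) * h2 p
end
end

section
/- Let u, v : ℝ × ℝ → ℝ be smooth solutions of system (3.9): u_t = u_xxx − (3/2)u_x v_xx − (3/4)u_x v_x² + (1/4)u_x³, v_t = −(1/2)v_xxx + (3/2)u_x u_xx − (3/4)u_x² v_x + (1/4)v_x³. Define the 4×4 matrices U₂ with rows (0, e^{v−u}, 0, 0), (0, 0, λe^{−v}, 0), (0, 0, 0, e^{u+v}), (λe^{−v}, 0, 0, 0), and V₂ with rows (0, e^{v−u}f₁, λe^{−u}(u_x+v_x), −2λe^{v}), (−2λ²e^{u−v}, 0, (λ/4)e^{−v}(2v_xx − 3u_x² + v_x²), λe^{u}(u_x − v_x)), (λe^{u}(v_x − u_x), −2λe^{v}, 0, e^{u+v}f₂), ((λ/4)e^{−v}(2v_xx − 3u_x² + v_x²), −λe^{−u}(u_x+v_x), −2λ²e^{−u−v}, 0), where f₁ = −u_xx − (1/2)v_xx + u_x v_x + (1/4)(u_x² + v_x²) and f₂ = u_xx − (1/2)v_xx − u_x v_x + (1/4)(u_x² + v_x²). Then for every constant λ, (U₂)_t − (V₂)_x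 + [U₂, V₂] = 0. -/
noncomputable section


lemma hline (a : ℝ) (y : ℝ) : HasDerivAt (fun y : ℝ => ((a, y) : ℝ × ℝ)) (0, 1) y :=
  (hasDerivAt_const y a).prodMk (hasDerivAt_id y)

lemma hlineT (b : ℝ) (s : ℝ) : HasDerivAt (fun s : ℝ => ((s, b) : ℝ × ℝ)) (1, 0) s :=
  (hasDerivAt_id s).prodMk (hasDerivAt_const s b)

lemma hasDerivAt_dx (f : ℝ × ℝ → ℝ) (hf : ContDiff ℝ (⊤ : ℕ∞) f) (p : ℝ × ℝ) :
    HasDerivAt (fun y => f (p.1, y)) (dx f p) p.2 := by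
  have h : DifferentiableAt ℝ (fun y => f (p.1, y)) p.2 :=
    (hf.differentiable (by simp) ((p.1, p.2))).comp p.2 ((hline p.1 p.2).differentiableAt)
  simpa [dx] using h.hasDerivAt

lemma hasDerivAt_dt (f : ℝ × ℝ → ℝ) (hf : ContDiff ℝ (⊤ : ℕ∞) f) (p : ℝ × ℝ) :
    HasDerivAt (fun s => f (s, p.2)) (dt f p) p.1 := by
  have h : DifferentiableAt ℝ (fun s => f (s, p.2)) p.1 :=
    (hf.differentiable (by simp) ((p.1, p.2))).comp p.1 ((hlineT p.2 p.1).differentiableAt)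
  simpa [dt] using h.hasDerivAt

lemma contDiff_dx (f : ℝ × ℝ → ℝ) (hf : ContDiff ℝ (⊤ : ℕ∞) f) : ContDiff ℝ (⊤ : ℕ∞) (dx f) := by
  have hdx : dx f = fun p => fderiv ℝ f p (0, 1) := by
    funext p
    have h1 : HasFDerivAt f (fderiv ℝ f p) p := (hf.differentiable (by simp) p).hasFDerivAt
    exact (h1.comp_hasDerivAt p.2 (hline p.1 p.2)).deriv
  rw [hdx]
  exact (hf.fderiv_right (le_refl _)).clm_apply contDiff_const

set_option maxHeartbeats 1000000 in
/-- The zero curvature representation for system (3.9) obtained in Example A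
of Section 5 via the substitution (3.1)→(3.9) and a twofold gauge transformation. -/
theorem stmt19 (u v : ℝ × ℝ → ℝ) (hu : ContDiff ℝ (⊤ : ℕ∞) u) (hv : ContDiff ℝ (⊤ : ℕ∞) v)
    (h1 : ∀ p, dt u p = dx (dx (dx u)) p - (3/2) * dx u p * dx (dx v) p
      - (3/4) * dx u p * (dx v p) ^ 2 + (1/4) * (dx u p) ^ 3)
    (h2 : ∀ p, dt v p = -(1/2) * dx (dx (dx v)) p + (3/2) * dx u p * dx (dx u) p
      - (3/4) * (dx u p) ^ 2 * dx v p + (1/4) * (dx v p) ^ 3)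
    (lam : ℝ) :
    let f1 : ℝ × ℝ → ℝ := fun p =>
      -(dx (dx u) p) - (1/2) * dx (dx v) p + dx u p * dx v p
        + (1/4) * ((dx u p) ^ 2 + (dx v p) ^ 2)
    let f2 : ℝ × ℝ → ℝ := fun p =>
      dx (dx u) p - (1/2) * dx (dx v) p - dx u p * dx v p
        + (1/4) * ((dx u p) ^ 2 + (dx v p) ^ 2)
    let U2 : ℝ × ℝ → Matrix (Fin 4) (Fin 4) ℝ := fun p =>
      !![0, Real.exp (v p - u p), 0, 0;
         0, 0, lam * Real.exp (-(v p)), 0;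
         0, 0, 0, Real.exp (u p + v p);
         lam * Real.exp (-(v p)), 0, 0, 0]
    let V2 : ℝ × ℝ → Matrix (Fin 4) (Fin 4) ℝ := fun p =>
      !![0, Real.exp (v p - u p) * f1 p,
           lam * Real.exp (-(u p)) * (dx u p + dx v p), -2 * lam * Real.exp (v p);
         -2 * lam ^ 2 * Real.exp (u p - v p), 0,
           (lam / 4) * Real.exp (-(v p)) * (2 * dx (dx v) p - 3 * (dx u p) ^ 2 + (dx v p) ^ 2),
           lam * Real.exp (u p) * (dx u p - dx v p);
         lam * Real.exp (u p) * (dx v p - dx u p), -2 * lam * Real.exp (v p), 0,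
           Real.exp (u p + v p) * f2 p;
         (lam / 4) * Real.exp (-(v p)) * (2 * dx (dx v) p - 3 * (dx u p) ^ 2 + (dx v p) ^ 2),
           -lam * Real.exp (-(u p)) * (dx u p + dx v p),
           -2 * lam ^ 2 * Real.exp (-(u p) - v p), 0]
    ∀ p, dtM 4 U2 p - dxM 4 V2 p + (U2 p * V2 p - V2 p * U2 p) = 0 := by
  intro f1 f2 U2 V2 p
  have cu1 := contDiff_dx u hu
  have cu2 := contDiff_dx _ cu1
  have cv1 := contDiff_dx v hv
  have cv2 := contDiff_dx _ cv1
  have hxu := hasDerivAt_dx u hu p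
  have hxxu := hasDerivAt_dx _ cu1 p
  have hxxxu := hasDerivAt_dx _ cu2 p
  have hxv := hasDerivAt_dx v hv p
  have hxxv := hasDerivAt_dx _ cv1 p
  have hxxxv := hasDerivAt_dx _ cv2 p
  have htu := hasDerivAt_dt u hu p
  have htv := hasDerivAt_dt v hv p
  ext i j
  fin_cases i <;> fin_cases j <;>
    simp only [Nat.succ_eq_add_one, Nat.reduceAdd, Fin.reduceFinMk, Fin.mk_one, Fin.zero_eta, Fin.isValue, dtM, dxM, Matrix.of_apply, U2, V2, f1, f2, Matrix.cons_val', Matrix.cons_val_zero,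
      Matrix.cons_val_one, Matrix.head_cons, Matrix.head_fin_const, Matrix.empty_val',
      Matrix.cons_val_fin_one, Matrix.cons_val_two, Matrix.tail_cons, Matrix.cons_val_three,
      Matrix.sub_apply, Matrix.add_apply, Matrix.mul_apply, Matrix.zero_apply, Fin.sum_univ_four,
      Fin.isValue, deriv_const']
  · simp only [Real.exp_sub, Real.exp_add, Real.exp_neg]
    field_simp
    ring
  -- goals: (0,1),(0,2),(0,3),(1,0),(1,1),(1,2),(1,3),(2,0),(2,1),(2,2),(2,3),(3,0),(3,1),(3,2),(3,3)
  · erw [((htv.sub htu).exp).deriv,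
      (((hxv.sub hxu).exp).mul ((((hxxxu.neg).sub (hxxxv.const_mul (1/2))).add (hxxu.mul hxxv)).add
        (((hxxu.pow 2).add (hxxv.pow 2)).const_mul (1/4)))).deriv]
    simp only [Pi.sub_apply, Pi.neg_apply, Pi.add_apply, Pi.mul_apply, Pi.pow_apply, Prod.mk.eta, h1, h2, Real.exp_sub, Real.exp_add, Real.exp_neg]
    field_simp
    ring
  · erw [(((hxu.neg.exp).const_mul lam).mul (hxxu.add hxxv)).deriv]
    simp only [Pi.sub_apply, Pi.neg_apply, Pi.add_apply, Pi.mul_apply, Pi.pow_apply, Prod.mk.eta, h1, h2, Real.exp_sub, Real.exp_add, Real.exp_neg]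
    field_simp
    ring
  · erw [((hxv.exp).const_mul ((-2:ℝ)*lam)).deriv]
    simp only [Pi.sub_apply, Pi.neg_apply, Pi.add_apply, Pi.mul_apply, Pi.pow_apply, Prod.mk.eta, h1, h2, Real.exp_sub, Real.exp_add, Real.exp_neg]
    field_simp
    ring
  · erw [(((hxu.sub hxv).exp).const_mul ((-2:ℝ)*lam^2)).deriv]
    simp only [Pi.sub_apply, Pi.neg_apply, Pi.add_apply, Pi.mul_apply, Pi.pow_apply, Prod.mk.eta, h1, h2, Real.exp_sub, Real.exp_add, Real.exp_neg]
    field_simp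
    ring
  · simp only [Real.exp_sub, Real.exp_add, Real.exp_neg]
    field_simp
    ring
  · erw [((htv.neg.exp).const_mul lam).deriv,
      (((hxv.neg.exp).const_mul (lam/4)).mul (((hxxxv.const_mul (2:ℝ)).sub
        ((hxxu.pow 2).const_mul (3:ℝ))).add (hxxv.pow 2))).deriv]
    simp only [Pi.sub_apply, Pi.neg_apply, Pi.add_apply, Pi.mul_apply, Pi.pow_apply, Prod.mk.eta, h1, h2, Real.exp_sub, Real.exp_add, Real.exp_neg]
    field_simp
    ring
  · erw [(((hxu.exp).const_mul lam).mul (hxxu.sub hxxv)).deriv]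
    simp only [Pi.sub_apply, Pi.neg_apply, Pi.add_apply, Pi.mul_apply, Pi.pow_apply, Prod.mk.eta, h1, h2, Real.exp_sub, Real.exp_add, Real.exp_neg]
    field_simp
    ring
  · erw [(((hxu.exp).const_mul lam).mul (hxxv.sub hxxu)).deriv]
    simp only [Pi.sub_apply, Pi.neg_apply, Pi.add_apply, Pi.mul_apply, Pi.pow_apply, Prod.mk.eta, h1, h2, Real.exp_sub, Real.exp_add, Real.exp_neg]
    field_simp
    ring
  · erw [((hxv.exp).const_mul ((-2:ℝ)*lam)).deriv]
    simp only [Pi.sub_apply, Pi.neg_apply, Pi.add_apply, Pi.mul_apply, Pi.pow_apply, Prod.mk.eta, h1, h2, Real.exp_sub, Real.exp_add, Real.exp_neg]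
    field_simp
    ring
  · simp only [Real.exp_sub, Real.exp_add, Real.exp_neg]
    field_simp
    ring
  · erw [((htu.add htv).exp).deriv,
      (((hxu.add hxv).exp).mul (((hxxxu.sub (hxxxv.const_mul (1/2))).sub (hxxu.mul hxxv)).add
        (((hxxu.pow 2).add (hxxv.pow 2)).const_mul (1/4)))).deriv]
    simp only [Pi.sub_apply, Pi.neg_apply, Pi.add_apply, Pi.mul_apply, Pi.pow_apply, Prod.mk.eta, h1, h2, Real.exp_sub, Real.exp_add, Real.exp_neg]
    field_simp
    ring
  · erw [((htv.neg.exp).const_mul lam).deriv,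
      (((hxv.neg.exp).const_mul (lam/4)).mul (((hxxxv.const_mul (2:ℝ)).sub
        ((hxxu.pow 2).const_mul (3:ℝ))).add (hxxv.pow 2))).deriv]
    simp only [Pi.sub_apply, Pi.neg_apply, Pi.add_apply, Pi.mul_apply, Pi.pow_apply, Prod.mk.eta, h1, h2, Real.exp_sub, Real.exp_add, Real.exp_neg]
    field_simp
    ring
  · erw [(((hxu.neg.exp).const_mul (-lam)).mul (hxxu.add hxxv)).deriv]
    simp only [Pi.sub_apply, Pi.neg_apply, Pi.add_apply, Pi.mul_apply, Pi.pow_apply, Prod.mk.eta, h1, h2, Real.exp_sub, Real.exp_add, Real.exp_neg]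
    field_simp
    ring
  · erw [(((hxu.neg.sub hxv).exp).const_mul ((-2:ℝ)*lam^2)).deriv]
    simp only [Pi.sub_apply, Pi.neg_apply, Pi.add_apply, Pi.mul_apply, Pi.pow_apply, Prod.mk.eta, h1, h2, Real.exp_sub, Real.exp_add, Real.exp_neg]
    field_simp
    ring
  · simp only [Real.exp_sub, Real.exp_add, Real.exp_neg]
    field_simp
    ring
end
end
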